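/- arXiv:math/0602035 — 7 statements merged into one kernel-verified Lean document; each statement's English description precedes it below -/
import Mathlib

section
/- Let (Ω,Σ,Pr) be a probability space, A_i ∈ Σ for i ∈ ℕ, and for each k ∈ ℕ let S_k := Σ_{1≤i₁<…<i_k} Pr(A_{i₁}∩…∩A_{i_k}). Suppose all S_l are finite and d, r ∈ ℤ₊. Then for each k ∈ ℕ the Bonferroni-type inequalities hold: Σ_{j=0}^{2d+1} (-1)^j C(j+k-1, k-1) S_{j+k} ≤ Pr(⋃_{i₁<…<i_k} (A_{i₁}∩…∩A_{i_k})) ≤ Σ_{j=0}^{2r} (-1)^j C(j+k-1, k-1) S_{j+k}. -/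
open MeasureTheory Filter ENNReal

noncomputable def S {Ω : Type*} [MeasurableSpace Ω] (μ : Measure Ω) (A : ℕ → Set Ω) (k : ℕ) :
    ℝ≥0∞ :=
  ∑' s : {s : Finset ℕ // s.card = k}, μ (⋂ i ∈ (s : Finset ℕ), A i)

/-- The union over all `k`-element subsets `{i₁<…<i_k}` of `ℕ` of `A_{i₁}∩…∩A_{i_k}`. -/
def unionInter {Ω : Type*} (A : ℕ → Set Ω) (k : ℕ) : Set Ω :=
  ⋃ s : {s : Finset ℕ // s.card = k}, ⋂ i ∈ (s : Finset ℕ), A i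

/-- partial sum in the Bonferroni identity, as an integer -/
def Lsum (n c t : ℕ) : ℤ :=
  ∑ j ∈ Finset.range t, (-1 : ℤ) ^ j * ((j + c).choose c) * (n.choose (j + c + 1))

lemma alt_partial (n : ℕ) : ∀ t, ∑ j ∈ Finset.range (t + 1), (-1 : ℤ) ^ j * ((n+1).choose j)
    = (-1) ^ t * (n.choose t) := by
  intro t
  induction t with
  | zero => simp
  | succ t ih =>
    rw [Finset.sum_range_succ, ih, Nat.choose_succ_succ (n := n) (k := t)]
    push_cast
    ring

lemma Lsum_zero (c t : ℕ) : Lsum 0 c t = 0 := by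
  unfold Lsum
  apply Finset.sum_eq_zero
  intro j _
  simp [Nat.choose_eq_zero_of_lt (by omega : 0 < j + c + 1)]

lemma Lsum_succ_pos (n c' t' : ℕ) :
    Lsum (n+1) (c'+1) (t'+1) = Lsum n (c'+1) (t'+1) + Lsum n c' (t'+1) - Lsum (n) (c'+1) t' := by
  unfold Lsum
  have h1 : ∀ j, ((-1:ℤ)^j * ((j + (c'+1)).choose (c'+1)) * ((n+1).choose (j + (c'+1) + 1)))
      = (-1:ℤ)^j * ((j + (c'+1)).choose (c'+1)) * (n.choose (j + (c'+1) + 1))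
        + ((-1:ℤ)^j * ((j + c').choose c') * (n.choose (j + c' + 1))
        + (-1:ℤ)^j * ((j + c').choose (c'+1)) * (n.choose (j + c' + 1))) := by
    intro j
    have e3 : j + (c'+1) = j + c' + 1 := by omega
    rw [e3]
    rw [Nat.choose_succ_succ (n + 0) (j + c' + 1), Nat.choose_succ_succ (j + c') c']
    simp only [Nat.succ_eq_add_one]
    push_cast
    ring_nf
  rw [Finset.sum_congr rfl (fun j _ => h1 j), Finset.sum_add_distrib, Finset.sum_add_distrib]
  have h2 : ∑ j ∈ Finset.range (t'+1), (-1:ℤ)^j * ((j + c').choose (c'+1)) * (n.choose (j + c' + 1))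
      = - ∑ j ∈ Finset.range t', (-1:ℤ)^j * ((j + (c'+1)).choose (c'+1)) * (n.choose (j + (c'+1) + 1)) := by
    rw [Finset.sum_range_succ', ← Finset.sum_neg_distrib]
    have hz : ((0 + c' : ℕ).choose (c'+1) : ℤ) = 0 := by
      simp [Nat.choose_eq_zero_of_lt (by omega : c' < c' + 1)]
    rw [hz]
    rw [show ((-1:ℤ))^0 * 0 * (n.choose (0 + c' + 1)) = 0 by ring, add_zero]
    apply Finset.sum_congr rfl
    intro j _
    rw [show j + 1 + c' = j + (c'+1) by omega]
    push_cast
    ring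
  rw [h2]
  ring

lemma Lsum_succ_zero (n' t : ℕ) :
    Lsum (n'+1+1) 0 t = Lsum (n'+1) 0 t + ∑ j ∈ Finset.range t, (-1:ℤ)^j * ((n'+1).choose j) := by
  unfold Lsum
  rw [← Finset.sum_add_distrib]
  apply Finset.sum_congr rfl
  intro j _
  simp only [Nat.add_zero, Nat.choose_zero_right]
  rw [Nat.choose_succ_succ (n'+1) j]
  push_cast
  ring

/-- The key pointwise Bonferroni inequality, integer version. -/
theorem bonferroni_key : ∀ (n c t : ℕ),
    0 ≤ (-1:ℤ)^(t+1) * (Lsum n c t - (if c + 1 ≤ n then 1 else 0)) := by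
  intro n
  induction n with
  | zero =>
    intro c t
    rw [Lsum_zero]
    simp
  | succ n ih =>
    intro c t
    match t with
    | 0 =>
      unfold Lsum
      simp only [Finset.range_zero, Finset.sum_empty, pow_one]
      split <;> simp
    | t' + 1 =>
      match c with
      | c' + 1 =>
        rw [Lsum_succ_pos]
        have h1 := ih (c'+1) (t'+1)
        have h2 := ih c' (t'+1)
        have h3 := ih (c'+1) t'
        have e : (if c' + 1 + 1 ≤ n + 1 then (1:ℤ) else 0) = (if c' + 1 ≤ n then 1 else 0) := by
          split <;> split <;> omega
        rw [e]
        have hs : (-1:ℤ)^(t'+1+1) = -(-1:ℤ)^(t'+1) := by ring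
        -- goal: 0 ≤ (-1)^(t+1) * (L n c t + L n c' t - L n c t' - ind(n,c'))
        -- = U(n,c,t) + U(n,c',t) + U(n,c,t')
        -- where ind decomposition: need ind(n,c'+1), ind(n,c'), ind(n,c'+1)
        have key : (-1:ℤ)^(t'+1+1) * (Lsum n (c'+1) (t'+1) + Lsum n c' (t'+1) - Lsum n (c'+1) t'
              - (if c' + 1 ≤ n then 1 else 0))
            = (-1:ℤ)^(t'+1+1) * (Lsum n (c'+1) (t'+1) - (if c' + 1 + 1 ≤ n then 1 else 0))
            + (-1:ℤ)^(t'+1+1) * (Lsum n c' (t'+1) - (if c' + 1 ≤ n then 1 else 0))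
            + (-1:ℤ)^(t'+1) * (Lsum n (c'+1) t' - (if c' + 1 + 1 ≤ n then 1 else 0)) := by
          have : (if c' + 1 ≤ n then (1:ℤ) else 0)
              = (if c' + 1 + 1 ≤ n then 1 else 0) + (if c' + 1 ≤ n then 1 else 0)
                - (if c' + 1 + 1 ≤ n then 1 else 0) := by ring
          rw [this]
          ring
        rw [key]
        have := add_nonneg (add_nonneg h1 h2) h3
        linarith
      | 0 =>
        match n with
        | 0 =>
          -- Lsum 1 0 (t'+1) = 1, indicator = 1
          have hl : Lsum 1 0 (t'+1) = 1 := by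
            unfold Lsum
            rw [Finset.sum_range_succ']
            have : ∀ j ∈ Finset.range t',
                (-1:ℤ)^(j+1) * ((j + 1 + 0).choose 0) * ((1:ℕ).choose (j + 1 + 0 + 1)) = 0 := by
              intro j _
              simp [Nat.choose_eq_zero_of_lt (by omega : 1 < j + 1 + 0 + 1)]
            rw [Finset.sum_congr rfl this]
            simp
          rw [hl]
          norm_num
        | n' + 1 =>
          rw [Lsum_succ_zero]
          have h1 := ih 0 (t'+1)
          have e : (if 0 + 1 ≤ n' + 1 + 1 then (1:ℤ) else 0) = (if 0 + 1 ≤ n' + 1 then 1 else 0) := by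
            norm_num
          rw [e]
          have halt : ∑ j ∈ Finset.range (t'+1), (-1:ℤ)^j * ((n'+1).choose j)
              = (-1)^t' * (n'.choose t') := alt_partial n' t'
          rw [halt]
          have key : (-1:ℤ)^(t'+1+1) * (Lsum (n'+1) 0 (t'+1) + (-1)^t' * (n'.choose t')
                - (if 0 + 1 ≤ n' + 1 then 1 else 0))
              = (-1:ℤ)^(t'+1+1) * (Lsum (n'+1) 0 (t'+1) - (if 0 + 1 ≤ n' + 1 then 1 else 0))
                + (n'.choose t' : ℤ) := by
            have h5 : (-1:ℤ)^(t'+1+1) * ((-1)^t' * (n'.choose t')) = (n'.choose t' : ℤ) := by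
              rw [← mul_assoc, ← pow_add, show t'+1+1+t' = 2*(t'+1) by omega, pow_mul]
              norm_num
            linarith [h5]
          rw [key]
          positivity

open MeasureTheory Filter ENNReal

section meas
variable {Ω : Type*} [MeasurableSpace Ω] (μ : Measure Ω) (A : ℕ → Set Ω)

/-- the "number of m-subsets of indices whose sets all contain ω" function -/
noncomputable def fcnt (m : ℕ) (ω : Ω) : ℝ≥0∞ :=
  ∑' s : {s : Finset ℕ // s.card = m}, (⋂ i ∈ (s : Finset ℕ), A i).indicator 1 ω

lemma inter_meas (hA : ∀ i, MeasurableSet (A i)) (s : Finset ℕ) : MeasurableSet (⋂ i ∈ s, A i) :=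
  MeasurableSet.biInter (Set.to_countable _) fun i _ => hA i

lemma fcnt_meas (hA : ∀ i, MeasurableSet (A i)) (m : ℕ) : Measurable (fcnt A m) :=
  Measurable.ennreal_tsum fun s => (measurable_one.indicator (inter_meas A hA s))

lemma S_eq_lintegral (hA : ∀ i, MeasurableSet (A i)) (m : ℕ) : S μ A m = ∫⁻ ω, fcnt A m ω ∂μ := by
  have h := lintegral_tsum (μ := μ)
    (f := fun (s : {s : Finset ℕ // s.card = m}) ω =>
      (⋂ i ∈ (s : Finset ℕ), A i).indicator (1 : Ω → ℝ≥0∞) ω)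
    (fun s => (measurable_one.indicator (inter_meas A hA s.1)).aemeasurable)
  calc S μ A m = ∑' s : {s : Finset ℕ // s.card = m},
        ∫⁻ ω, (⋂ i ∈ (s : Finset ℕ), A i).indicator 1 ω ∂μ :=
      tsum_congr fun s => (lintegral_indicator_one (inter_meas A hA s.1)).symm
  _ = ∫⁻ ω, fcnt A m ω ∂μ := h.symm

lemma mem_inter_iff (ω : Ω) (s : Finset ℕ) :
    ω ∈ (⋂ i ∈ s, A i) ↔ ∀ i ∈ s, ω ∈ A i := by simp

/-- if ω lies in infinitely many A i, then fcnt 1 ω = ∞ -/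
lemma fcnt_one_eq_top (ω : Ω) (h : {i | ω ∈ A i}.Infinite) : fcnt A 1 ω = ∞ := by
  by_contra hne
  obtain ⟨n, hn⟩ := ENNReal.exists_nat_gt hne
  obtain ⟨F, hFsub, hFcard⟩ := h.exists_subset_card_eq n
  let emb : ℕ ↪ {s : Finset ℕ // s.card = 1} :=
    ⟨fun i => ⟨{i}, Finset.card_singleton i⟩, fun a b hab => by
      simpa [Finset.singleton_inj] using congrArg (fun s => s.1) hab⟩
  have hle : (n : ℝ≥0∞) ≤ fcnt A 1 ω := by
    have := ENNReal.sum_le_tsum (f := fun s : {s : Finset ℕ // s.card = 1} =>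
      (⋂ i ∈ (s : Finset ℕ), A i).indicator (1 : Ω → ℝ≥0∞) ω) (F.map emb)
    refine le_trans ?_ this
    rw [Finset.sum_map]
    have : ∀ i ∈ F, (⋂ j ∈ ((emb i : {s : Finset ℕ // s.card = 1}) : Finset ℕ), A j).indicator
        (1 : Ω → ℝ≥0∞) ω = 1 := by
      intro i hi
      have hmem : ω ∈ ⋂ j ∈ ({i} : Finset ℕ), A j := by
        simp only [Finset.mem_singleton, Set.mem_iInter]
        rintro j rfl
        exact hFsub hi
      exact Set.indicator_of_mem hmem (1 : Ω → ℝ≥0∞)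
    rw [Finset.sum_congr rfl this]
    simp [hFcard]
  exact absurd (lt_of_lt_of_le hn hle) (by simp)

/-- a.e. ω lies in only finitely many A i -/
lemma ae_finite (hA : ∀ i, MeasurableSet (A i)) [IsProbabilityMeasure μ] (hfin : S μ A 1 ≠ ∞) :
    ∀ᵐ ω ∂μ, {i | ω ∈ A i}.Finite := by
  have h1 : ∫⁻ ω, fcnt A 1 ω ∂μ ≠ ∞ := by rwa [← S_eq_lintegral μ A hA]
  filter_upwards [ae_lt_top (fcnt_meas A hA 1) h1] with ω hω
  by_contra hinf
  rw [fcnt_one_eq_top A ω hinf] at hω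
  exact absurd hω (by simp)

/-- pointwise value of fcnt on the finite event -/
lemma fcnt_eq_choose (m : ℕ) (ω : Ω) (hI : {i | ω ∈ A i}.Finite) :
    fcnt A m ω = ((hI.toFinset.card).choose m : ℝ≥0∞) := by
  classical
  set F := hI.toFinset with hF
  have hval : ∀ s : {s : Finset ℕ // s.card = m},
      (⋂ i ∈ (s : Finset ℕ), A i).indicator (1 : Ω → ℝ≥0∞) ω
        = if (s : Finset ℕ) ⊆ F then 1 else 0 := by
    intro s
    by_cases hsub : (s : Finset ℕ) ⊆ F
    · rw [if_pos hsub]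
      apply Set.indicator_of_mem
      rw [mem_inter_iff]
      intro i hi
      have := hsub hi
      rw [hF, Set.Finite.mem_toFinset] at this
      exact this
    · rw [if_neg hsub]
      apply Set.indicator_of_notMem
      rw [mem_inter_iff]
      push_neg
      obtain ⟨i, hi, hni⟩ := Finset.not_subset.mp hsub
      exact ⟨i, hi, fun hmem => hni (by rw [hF, Set.Finite.mem_toFinset]; exact hmem)⟩
  unfold fcnt
  rw [tsum_congr hval]
  have hinj : Function.Injective
      (fun s : {x // x ∈ F.powersetCard m} => (⟨s.1, (Finset.mem_powersetCard.mp s.2).2⟩ :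
        {s : Finset ℕ // s.card = m})) := by
    intro a b hab
    ext : 1
    simpa using congrArg (fun x => x.1) hab
  set T : Finset {s : Finset ℕ // s.card = m} :=
    (F.powersetCard m).attach.map ⟨_, hinj⟩ with hT
  rw [tsum_eq_sum (s := T) ?_]
  · have : ∀ s ∈ T, (if (s : Finset ℕ) ⊆ F then (1:ℝ≥0∞) else 0) = 1 := by
      intro s hs
      rw [hT, Finset.mem_map] at hs
      obtain ⟨a, _, rfl⟩ := hs
      simp [(Finset.mem_powersetCard.mp a.2).1]
    rw [Finset.sum_congr rfl this]
    simp [hT, Finset.card_powersetCard]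
  · intro s hs
    rw [if_neg]
    intro hsub
    apply hs
    rw [hT, Finset.mem_map]
    exact ⟨⟨s.1, Finset.mem_powersetCard.mpr ⟨hsub, s.2⟩⟩, Finset.mem_attach _ _, rfl⟩

lemma mem_unionInter_iff (k : ℕ) (ω : Ω) (hI : {i | ω ∈ A i}.Finite) :
    ω ∈ unionInter A k ↔ k ≤ hI.toFinset.card := by
  unfold unionInter
  rw [Set.mem_iUnion]
  constructor
  · rintro ⟨s, hs⟩
    rw [mem_inter_iff] at hs
    have hsub : (s : Finset ℕ) ⊆ hI.toFinset := fun i hi =>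
      (Set.Finite.mem_toFinset hI).mpr (hs i hi)
    calc k = (s : Finset ℕ).card := s.2.symm
    _ ≤ _ := Finset.card_le_card hsub
  · intro hk
    obtain ⟨t, hts, htc⟩ := Finset.exists_subset_card_eq hk
    refine ⟨⟨t, htc⟩, ?_⟩
    rw [mem_inter_iff]
    intro i hi
    have := hts hi
    rw [Set.Finite.mem_toFinset] at this
    exact this

lemma unionInter_meas (hA : ∀ i, MeasurableSet (A i)) (k : ℕ) : MeasurableSet (unionInter A k) :=
  MeasurableSet.iUnion fun s => inter_meas A hA s.1

end meas

theorem stmt1 {Ω : Type*} [MeasurableSpace Ω] (μ : Measure Ω) [IsProbabilityMeasure μ]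
    (A : ℕ → Set Ω) (hA : ∀ i, MeasurableSet (A i))
    (hfin : ∀ l, 1 ≤ l → S μ A l ≠ ∞) (d r : ℕ) (k : ℕ) (hk : 1 ≤ k) :
    (∑ j ∈ Finset.range (2 * d + 2),
        (-1 : ℝ) ^ j * (Nat.choose (j + k - 1) (k - 1)) * (S μ A (j + k)).toReal)
        ≤ (μ (unionInter A k)).toReal ∧
    (μ (unionInter A k)).toReal ≤
      ∑ j ∈ Finset.range (2 * r + 1),
        (-1 : ℝ) ^ j * (Nat.choose (j + k - 1) (k - 1)) * (S μ A (j + k)).toReal := by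
  have hlint : ∀ m, 1 ≤ m → ∫⁻ ω, fcnt A m ω ∂μ ≠ ∞ := fun m hm => by
    rw [← S_eq_lintegral μ A hA]; exact hfin m hm
  have hint : ∀ m, 1 ≤ m → Integrable (fun ω => (fcnt A m ω).toReal) μ := fun m hm =>
    integrable_toReal_of_lintegral_ne_top (fcnt_meas A hA m).aemeasurable (hlint m hm)
  have hSeq : ∀ m, 1 ≤ m → (S μ A m).toReal = ∫ ω, (fcnt A m ω).toReal ∂μ := fun m hm => by
    rw [S_eq_lintegral μ A hA,
      integral_toReal (fcnt_meas A hA m).aemeasurable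
        (ae_lt_top (fcnt_meas A hA m) (hlint m hm))]
  -- the sum equals an integral
  have sum_eq : ∀ t : ℕ,
      (∑ j ∈ Finset.range t,
        (-1 : ℝ) ^ j * (Nat.choose (j + k - 1) (k - 1)) * (S μ A (j + k)).toReal)
      = ∫ ω, ∑ j ∈ Finset.range t,
          (-1 : ℝ) ^ j * (Nat.choose (j + k - 1) (k - 1)) * (fcnt A (j + k) ω).toReal ∂μ := by
    intro t
    rw [integral_finset_sum _ (fun j _ => ((hint (j + k) (by omega)).const_mul _))]
    apply Finset.sum_congr rfl
    intro j _
    rw [hSeq (j + k) (by omega), integral_const_mul]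
  have hindmeas := unionInter_meas A hA k
  have hind_int : Integrable ((unionInter A k).indicator (1 : Ω → ℝ)) μ :=
    (integrable_const 1).indicator hindmeas
  have hμeq : (μ (unionInter A k)).toReal = ∫ ω, (unionInter A k).indicator 1 ω ∂μ :=
    (integral_indicator_one hindmeas).symm
  -- casting the integer Lsum
  have hcast : ∀ (n t : ℕ), ((Lsum n (k - 1) t : ℤ) : ℝ)
      = ∑ j ∈ Finset.range t,
        (-1 : ℝ) ^ j * (Nat.choose (j + k - 1) (k - 1)) * (n.choose (j + k)) := by
    intro n t
    unfold Lsum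
    push_cast
    apply Finset.sum_congr rfl
    intro j _
    rw [show j + (k - 1) + 1 = j + k by omega, show j + (k - 1) = j + k - 1 by omega]
  -- pointwise values on the a.e. finite event
  have hpoint : ∀ (t : ℕ) (ω : Ω) (hI : {i | ω ∈ A i}.Finite),
      (∑ j ∈ Finset.range t,
        (-1 : ℝ) ^ j * (Nat.choose (j + k - 1) (k - 1)) * (fcnt A (j + k) ω).toReal)
      = ((Lsum hI.toFinset.card (k - 1) t : ℤ) : ℝ) := by
    intro t ω hI
    rw [hcast]
    apply Finset.sum_congr rfl
    intro j _
    rw [fcnt_eq_choose A (j + k) ω hI]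
    norm_num
  have hindval : ∀ (ω : Ω) (hI : {i | ω ∈ A i}.Finite),
      (unionInter A k).indicator (1 : Ω → ℝ) ω
        = ((if k + 1 ≤ hI.toFinset.card + 1 then (1 : ℤ) else 0 : ℤ) : ℝ) := by
    intro ω hI
    have hiff := mem_unionInter_iff A k ω hI
    by_cases h : ω ∈ unionInter A k
    · have hle : k ≤ hI.toFinset.card := hiff.mp h
      rw [Set.indicator_of_mem h, if_pos (by omega)]
      simp
    · rw [Set.indicator_of_notMem h, if_neg (fun hc => h (hiff.mpr (by omega)))]
      simp
  constructor
  · -- lower bound, t = 2d+2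
    rw [hμeq, sum_eq]
    refine integral_mono_ae
      (integrable_finset_sum _ fun j _ => (hint (j + k) (by omega)).const_mul _) hind_int ?_
    · filter_upwards [ae_finite μ A hA (hfin 1 le_rfl)] with ω hI
      rw [hpoint (2 * d + 2) ω hI, hindval ω hI]
      have hkey := bonferroni_key hI.toFinset.card (k - 1) (2 * d + 2)
      have hodd : ((-1 : ℤ)) ^ (2 * d + 2 + 1) = -1 := Odd.neg_one_pow ⟨d + 1, by ring⟩
      rw [hodd] at hkey
      have hkk : k - 1 + 1 = k := by omega
      rw [hkk] at hkey
      have : Lsum hI.toFinset.card (k - 1) (2 * d + 2)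
          ≤ (if k ≤ hI.toFinset.card then (1 : ℤ) else 0) := by linarith
      have h2 : (if k + 1 ≤ hI.toFinset.card + 1 then (1 : ℤ) else 0)
          = (if k ≤ hI.toFinset.card then (1 : ℤ) else 0) := by
        split <;> split <;> omega
      rw [h2]
      exact_mod_cast this
  · -- upper bound, t = 2r+1
    rw [hμeq, sum_eq]
    refine integral_mono_ae hind_int
      (integrable_finset_sum _ fun j _ => (hint (j + k) (by omega)).const_mul _) ?_
    · filter_upwards [ae_finite μ A hA (hfin 1 le_rfl)] with ω hI
      rw [hpoint (2 * r + 1) ω hI, hindval ω hI]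
      have hkey := bonferroni_key hI.toFinset.card (k - 1) (2 * r + 1)
      have heven : ((-1 : ℤ)) ^ (2 * r + 1 + 1) = 1 := Even.neg_one_pow ⟨r + 1, by ring⟩
      rw [heven] at hkey
      have hkk : k - 1 + 1 = k := by omega
      rw [hkk] at hkey
      have : (if k ≤ hI.toFinset.card then (1 : ℤ) else 0)
          ≤ Lsum hI.toFinset.card (k - 1) (2 * r + 1) := by linarith
      have h2 : (if k + 1 ≤ hI.toFinset.card + 1 then (1 : ℤ) else 0)
          = (if k ≤ hI.toFinset.card then (1 : ℤ) else 0) := by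
        split <;> split <;> omega
      rw [h2]
      exact_mod_cast this
end

section
/- Let (Ω,Σ,Pr) be a probability space and A_i ∈ Σ for i ∈ ℕ with S_l := Σ_{1≤i₁<…<i_l} Pr(A_{i₁}∩…∩A_{i_l}). Then the countable inclusion-exclusion identity Pr(⋃_{i∈ℕ} A_i) = Σ_{k=1}^∞ (-1)^{k-1} S_k (convergent series) holds if and only if all S_l are finite and S_l → 0 as l → ∞. -/
/-!
Let `N ω` be the number of indices `i` with `ω ∈ A i`. Counting `k`-subsets pointwise gives
`S_k = ∫ C(N, k) dμ`; in particular `S_1 < ∞` forces `N < ∞` almost everywhere. For finite `N`,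
`∑_{k=1}^n (-1)^(k-1) C(N, k) = 1_{N ≥ 1} ∓ C(N - 1, n)`, and `C(N - 1, n) ≤ C(N, n)`, so after
integrating, the `n`-th partial sum of the inclusion–exclusion series lies within `S_n` of
`μ(⋃ A_i)`. Hence `S_n → 0` gives convergence, and conversely the terms `± S_n` of a convergent
series tend to `0`.
-/

open MeasureTheory Filter ENNReal

theorem sum_Icc_neg_one_pow_mul_choose_succ (N n : ℕ) :
    ∑ k ∈ Finset.Icc 1 n, (-1 : ℝ) ^ (k - 1) * ((N + 1).choose k : ℝ) =
      1 - (-1) ^ n * (N.choose n : ℝ) := by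
  induction n with
  | zero => simp
  | succ n ih =>
    rw [Finset.sum_Icc_succ_top (by omega), ih, Nat.choose_succ_succ, Nat.add_sub_cancel]
    push_cast
    ring

theorem abs_sum_Icc_neg_one_pow_mul_choose_sub_le (N n : ℕ) :
    |∑ k ∈ Finset.Icc 1 n, (-1 : ℝ) ^ (k - 1) * (N.choose k : ℝ) - if N = 0 then 0 else 1| ≤
      N.choose n := by
  cases N with
  | zero =>
    rw [Finset.sum_eq_zero fun k hk => by
      rw [Nat.choose_eq_zero_of_lt (Finset.mem_Icc.1 hk).1, Nat.cast_zero, mul_zero]]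
    simp
  | succ N =>
    rw [sum_Icc_neg_one_pow_mul_choose_succ, if_neg N.succ_ne_zero, sub_sub_cancel_left, abs_neg,
      abs_mul, abs_pow, abs_neg, abs_one, one_pow, one_mul, Nat.abs_cast]
    exact_mod_cast Nat.choose_le_succ N n

theorem tendsto_zero_of_tendsto_sum_Icc_neg_one_pow_mul {a : ℕ → ℝ} {L : ℝ}
    (h : Tendsto (fun n => ∑ k ∈ Finset.Icc 1 n, (-1 : ℝ) ^ (k - 1) * a k) atTop (nhds L)) :
    Tendsto a atTop (nhds 0) := by
  have hdiff := ((h.comp (tendsto_add_atTop_nat 1)).sub h).abs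
  rw [sub_self, abs_zero] at hdiff
  refine (tendsto_add_atTop_iff_nat 1).1 (tendsto_zero_iff_abs_tendsto_zero _ |>.2 ?_)
  refine hdiff.congr fun n => ?_
  simp [Finset.sum_Icc_succ_top, abs_mul]

section
variable {Ω : Type*} (A : ℕ → Set Ω)

/-- The integrand of `S μ A k`; it equals `C(#{i | ω ∈ A i}, k)`. -/
noncomputable def interCount (k : ℕ) (ω : Ω) : ℝ≥0∞ :=
  ∑' s : {s : Finset ℕ // s.card = k}, (⋂ i ∈ (s : Finset ℕ), A i).indicator 1 ω

theorem interCount_eq_encard (k : ℕ) (ω : Ω) :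
    interCount A k ω = {s : Finset ℕ | s.card = k ∧ ∀ i ∈ s, ω ∈ A i}.encard := by
  rw [← ENNReal.tsum_set_one, tsum_subtype _ (fun _ => (1 : ℝ≥0∞))]
  refine (tsum_subtype {s : Finset ℕ | s.card = k} fun s => (⋂ i ∈ s, A i).indicator 1 ω).trans ?_
  congr 1
  ext s
  classical
  simp [Set.indicator_apply, ite_and]

theorem interCount_eq_choose {ω : Ω} {t : Finset ℕ} (ht : ∀ i, ω ∈ A i ↔ i ∈ t) (k : ℕ) :
    interCount A k ω = t.card.choose k := by
  have hset : {s : Finset ℕ | s.card = k ∧ ∀ i ∈ s, ω ∈ A i} = t.powersetCard k := by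
    ext s
    simp [ht, Finset.subset_iff, and_comm]
  rw [interCount_eq_encard, hset, Set.encard_coe_eq_coe_finsetCard, Finset.card_powersetCard]
  rfl

theorem finite_setOf_mem_of_interCount_one_ne_top {ω : Ω} (h : interCount A 1 ω ≠ ∞) :
    {i | ω ∈ A i}.Finite := by
  by_contra hinf
  have : Infinite {i // ω ∈ A i} := Set.infinite_coe_iff.2 hinf
  refine h ?_
  rw [interCount_eq_encard, Set.encard_eq_top (Set.infinite_of_injective_forall_mem
    (f := fun i : {i // ω ∈ A i} => ({i.1} : Finset ℕ)) ?_ ?_)]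
  · rfl
  · exact fun i j hij => Subtype.ext (Finset.singleton_injective hij)
  · exact fun i => by simpa using i.2

theorem indicator_iUnion_le_interCount_one (ω : Ω) :
    (⋃ i, A i).indicator 1 ω ≤ interCount A 1 ω := by
  by_cases hω : ω ∈ ⋃ i, A i
  · obtain ⟨i, hi⟩ := Set.mem_iUnion.1 hω
    refine le_trans ?_ (ENNReal.le_tsum ⟨{i}, Finset.card_singleton i⟩)
    simp [hω, hi]
  · simp [hω]

theorem abs_sum_interCount_sub_indicator_le {ω : Ω} (hω : {i | ω ∈ A i}.Finite) (n : ℕ) :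
    |∑ k ∈ Finset.Icc 1 n, (-1 : ℝ) ^ (k - 1) * (interCount A k ω).toReal -
      (⋃ i, A i).indicator 1 ω| ≤ (interCount A n ω).toReal := by
  have ht : ∀ i, ω ∈ A i ↔ i ∈ hω.toFinset := fun i => by simp
  have hU : (⋃ i, A i).indicator (1 : Ω → ℝ) ω = if hω.toFinset.card = 0 then 0 else 1 := by
    classical
    simp [Set.indicator_apply, Finset.card_eq_zero, Set.eq_empty_iff_forall_notMem, ← not_exists,
      ite_not]
  simp only [interCount_eq_choose A ht, hU, ENNReal.toReal_natCast]
  exact abs_sum_Icc_neg_one_pow_mul_choose_sub_le _ n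

end

section
variable {Ω : Type*} [MeasurableSpace Ω] (μ : Measure Ω) {A : ℕ → Set Ω}
  (hA : ∀ i, MeasurableSet (A i))
include hA

theorem measurable_interCount (k : ℕ) : Measurable (interCount A k) :=
  Measurable.tsum fun _ =>
    measurable_one.indicator (Finset.measurableSet_biInter _ fun i _ => hA i)

theorem lintegral_interCount (k : ℕ) : ∫⁻ ω, interCount A k ω ∂μ = S μ A k := by
  have hs (s : Finset ℕ) : MeasurableSet (⋂ i ∈ s, A i) := s.measurableSet_biInter fun i _ => hA i
  simp_rw [interCount]
  rw [lintegral_tsum (f := fun (s : {s : Finset ℕ // s.card = k}) ω =>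
    (⋂ i ∈ s.1, A i).indicator 1 ω) fun s => (measurable_one.indicator (hs s)).aemeasurable]
  exact tsum_congr fun s => lintegral_indicator_one (hs s)

theorem measure_iUnion_le_S_one : μ (⋃ i, A i) ≤ S μ A 1 := by
  rw [← lintegral_indicator_one (.iUnion hA), ← lintegral_interCount μ hA]
  exact lintegral_mono (indicator_iUnion_le_interCount_one A)

theorem ae_finite_setOf_mem (h : S μ A 1 ≠ ∞) : ∀ᵐ ω ∂μ, {i | ω ∈ A i}.Finite := by
  refine (ae_lt_top (measurable_interCount hA 1) ?_).mono fun ω hω =>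
    finite_setOf_mem_of_interCount_one_ne_top A hω.ne
  rwa [lintegral_interCount μ hA]

theorem integrable_toReal_interCount {k : ℕ} (hk : S μ A k ≠ ∞) :
    Integrable (fun ω => (interCount A k ω).toReal) μ :=
  integrable_toReal_of_lintegral_ne_top (measurable_interCount hA k).aemeasurable
    (by rwa [lintegral_interCount μ hA])

theorem integral_toReal_interCount {k : ℕ} (hk : S μ A k ≠ ∞) :
    ∫ ω, (interCount A k ω).toReal ∂μ = (S μ A k).toReal := by
  rw [integral_toReal (measurable_interCount hA k).aemeasurable
    (ae_lt_top (measurable_interCount hA k) (by rwa [lintegral_interCount μ hA])),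
    lintegral_interCount μ hA]

end

theorem abs_sum_Icc_S_sub_measure_iUnion_le {Ω : Type*} [MeasurableSpace Ω] (μ : Measure Ω)
    {A : ℕ → Set Ω} (hA : ∀ i, MeasurableSet (A i)) (hS : ∀ l, 1 ≤ l → S μ A l ≠ ∞) {n : ℕ}
    (hn : 1 ≤ n) :
    |∑ k ∈ Finset.Icc 1 n, (-1 : ℝ) ^ (k - 1) * (S μ A k).toReal - (μ (⋃ i, A i)).toReal| ≤
      (S μ A n).toReal := by
  have hU : MeasurableSet (⋃ i, A i) := .iUnion hA
  have hint (k) (hk : k ∈ Finset.Icc 1 n) :=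
    integrable_toReal_interCount μ hA (hS k (Finset.mem_Icc.1 hk).1)
  have hsum : Integrable (fun ω => ∑ k ∈ Finset.Icc 1 n,
      (-1 : ℝ) ^ (k - 1) * (interCount A k ω).toReal) μ :=
    integrable_finsetSum _ fun k hk => (hint k hk).const_mul _
  have hind : Integrable ((⋃ i, A i).indicator (1 : Ω → ℝ)) μ :=
    (integrable_indicator_iff hU).2 <| integrableOn_const <|
      ((measure_iUnion_le_S_one μ hA).trans_lt (hS 1 le_rfl).lt_top).ne
  have hdiff : ∑ k ∈ Finset.Icc 1 n, (-1 : ℝ) ^ (k - 1) * (S μ A k).toReal -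
      (μ (⋃ i, A i)).toReal = ∫ ω, (∑ k ∈ Finset.Icc 1 n,
        (-1 : ℝ) ^ (k - 1) * (interCount A k ω).toReal - (⋃ i, A i).indicator 1 ω) ∂μ := by
    rw [integral_sub hsum hind, integral_finsetSum _ fun k hk => (hint k hk).const_mul _,
      integral_indicator_one hU]
    congr 1
    refine Finset.sum_congr rfl fun k hk => ?_
    rw [integral_const_mul, integral_toReal_interCount μ hA (hS k (Finset.mem_Icc.1 hk).1)]
  rw [hdiff, ← integral_toReal_interCount μ hA (hS n hn), ← Real.norm_eq_abs]
  refine norm_integral_le_of_norm_le (integrable_toReal_interCount μ hA (hS n hn)) ?_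
  filter_upwards [ae_finite_setOf_mem μ hA (hS 1 le_rfl)] with ω hω
  exact abs_sum_interCount_sub_indicator_le A hω n

theorem stmt3_general {Ω : Type*} [MeasurableSpace Ω] (μ : Measure Ω)
    (A : ℕ → Set Ω) (hA : ∀ i, MeasurableSet (A i)) :
    ((∀ l, 1 ≤ l → S μ A l ≠ ∞) ∧
      Tendsto (fun n => ∑ k ∈ Finset.Icc 1 n, (-1 : ℝ) ^ (k - 1) * (S μ A k).toReal)
        atTop (nhds (μ (⋃ i, A i)).toReal)) ↔
    ((∀ l, 1 ≤ l → S μ A l ≠ ∞) ∧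
      Tendsto (fun l : ℕ => (S μ A l).toReal) atTop (nhds 0)) := by
  refine and_congr_right fun hS =>
    ⟨tendsto_zero_of_tendsto_sum_Icc_neg_one_pow_mul, fun hlim => ?_⟩
  rw [tendsto_iff_norm_sub_tendsto_zero]
  refine squeeze_zero' (.of_forall fun n => norm_nonneg _) ?_ hlim
  filter_upwards [eventually_ge_atTop 1] with n hn
  exact abs_sum_Icc_S_sub_measure_iUnion_le μ hA hS hn

/-- The countable inclusion-exclusion identity
`Pr(⋃ A_i) = Σ_{k≥1} (-1)^(k-1) S_k` (with convergent series) holds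
iff all `S_l` are finite and `S_l → 0`. -/
theorem stmt3 {Ω : Type*} [MeasurableSpace Ω] (μ : Measure Ω) [IsProbabilityMeasure μ]
    (A : ℕ → Set Ω) (hA : ∀ i, MeasurableSet (A i)) :
    ((∀ l, 1 ≤ l → S μ A l ≠ ∞) ∧
      Tendsto (fun n => ∑ k ∈ Finset.Icc 1 n, (-1 : ℝ) ^ (k - 1) * (S μ A k).toReal)
        atTop (nhds (μ (⋃ i, A i)).toReal)) ↔
    ((∀ l, 1 ≤ l → S μ A l ≠ ∞) ∧
      Tendsto (fun l : ℕ => (S μ A l).toReal) atTop (nhds 0)) :=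
  stmt3_general μ A hA
end

section
/- Let (Ω,Σ,Pr) be a probability space and A_i ∈ Σ for i ∈ ℕ. If S_k := Σ_{1≤i₁<…<i_k} Pr(A_{i₁}∩…∩A_{i_k}) is finite for some k ∈ ℕ, then Pr(limsup_i A_i) = 0, i.e., almost surely only finitely many of the events A_i occur. -/
open MeasureTheory Filter ENNReal

lemma aux_infinite_ksubsets {I : Set ℕ} (hI : I.Infinite) {k : ℕ} (hk : 1 ≤ k) :
    {s : Finset ℕ | ↑s ⊆ I ∧ s.card = k}.Infinite := by
  intro hfin
  set F : Finset (Finset ℕ) := hfin.toFinset with hF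
  set U : Finset ℕ := F.sup id with hU
  obtain ⟨t, htI, htf, htc⟩ := (hI.diff U.finite_toSet).exists_subset_ncard_eq k
  have htmem : htf.toFinset ∈ F := by
    rw [hF, Set.Finite.mem_toFinset]
    constructor
    · intro i hi
      have : i ∈ t := by simpa using hi
      exact (htI this).1
    · rw [← htc, Set.ncard_eq_toFinset_card _ htf]
  -- every element of a member of F is in U
  have hne : htf.toFinset.Nonempty := by
    rw [← Finset.card_pos, ← Set.ncard_eq_toFinset_card _ htf, htc]; omega
  obtain ⟨i, hi⟩ := hne
  have hiU : i ∈ U := Finset.le_sup (f := id) htmem hi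
  have : i ∈ t := by simpa using hi
  exact (htI this).2 (by simpa using hiU)

/-- If `S_k < ∞` for some `k ≥ 1`, then almost surely only finitely many of the
events `A_i` occur (generalized Borel–Cantelli). -/
theorem stmt7 {Ω : Type*} [MeasurableSpace Ω] (μ : Measure Ω) [IsProbabilityMeasure μ]
    (A : ℕ → Set Ω) (hA : ∀ i, MeasurableSet (A i))
    (k : ℕ) (hk : 1 ≤ k) (hfin : S μ A k ≠ ∞) :
    μ (⋂ n, ⋃ i, ⋃ _ : n ≤ i, A i) = 0 := by
  set B : Finset ℕ → Set Ω := fun s => if s.card = k then ⋂ i ∈ s, A i else ∅ with hB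
  have hsum : ∑' s : Finset ℕ, μ (B s) ≠ ∞ := by
    have : ∀ s : Finset ℕ, μ (B s) =
        ({s : Finset ℕ | s.card = k}.indicator fun s => μ (⋂ i ∈ s, A i)) s := by
      intro s
      by_cases h : s.card = k <;>
        simp [hB, h, Set.indicator_of_mem, Set.indicator_of_notMem, Set.mem_setOf_eq]
    rw [tsum_congr this, ← tsum_subtype]
    exact hfin
  have hls : μ (limsup B cofinite) = 0 := measure_limsup_cofinite_eq_zero hsum
  refine measure_mono_null ?_ hls
  rw [Filter.cofinite.limsup_set_eq]
  intro x hx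
  simp only [Set.mem_iInter, Set.mem_iUnion] at hx
  have hI : {i | x ∈ A i}.Infinite := by
    intro hIf
    obtain ⟨n, hn⟩ := hIf.bddAbove
    obtain ⟨i, hi, hxi⟩ := hx (n + 1)
    have : i ≤ n := hn hxi
    omega
  have hks := aux_infinite_ksubsets hI hk
  refine Set.Infinite.mono ?_ hks
  intro s hs
  obtain ⟨hsI, hsc⟩ := hs
  simp only [Set.mem_setOf_eq, hB, hsc, if_true, Set.mem_iInter]
  intro i hi
  exact hsI hi
end

section
/- Let (Ω,Σ,Pr) be a probability space, A_i ∈ Σ for i ∈ ℕ, with Pr(limsup A_i) = 0. Define T_j := Σ_{|U|=j} Pr(B_U), where B_U is the event that exactly the A_i with i ∈ U occur. Then for every k ∈ ℕ one has, as an identity in [0,∞], S_k = Σ_{j=0}^∞ C(j+k, k) T_{j+k}, where S_k := Σ_{1≤i₁<…<i_k} Pr(A_{i₁}∩…∩A_{i_k}); in particular S_k is finite if and only if the series on the right converges. -/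
open MeasureTheory Filter ENNReal

def B {Ω : Type*} (A : ℕ → Set Ω) (U : Finset ℕ) : Set Ω :=
  (⋂ i ∈ U, A i) \ ⋃ i ∈ {i : ℕ | i ∉ U}, A i

noncomputable def T {Ω : Type*} [MeasurableSpace Ω] (μ : Measure Ω) (A : ℕ → Set Ω) (j : ℕ) :
    ℝ≥0∞ :=
  ∑' U : {U : Finset ℕ // U.card = j}, μ (B A (U : Finset ℕ))

/-!
Outside the null set `limsup A_i`, a point `ω` lies in only finitely many `A_i`, hence in exactly
one `B_U`, namely for `U = {i | ω ∈ A i}`. So `⋂_{i ∈ s} A_i` is, up to a null set, the disjoint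
union of the `B_U` with `U ⊇ s`, and summing over all `s` with `|s| = k` counts each `B_U`
exactly `C(|U|, k)` times. Grouping the `U` by cardinality gives `S_k = Σ_j C(j, k) T_j`, whose
terms with `j < k` vanish.
-/

section

open Function

variable {Ω : Type*} {A : ℕ → Set Ω}

theorem mem_B_iff {U : Finset ℕ} {ω : Ω} : ω ∈ B A U ↔ ∀ i, i ∈ U ↔ ω ∈ A i := by
  simp only [B, Set.mem_sdiff, Set.mem_iInter, Set.mem_iUnion, Set.mem_ofPred_eq, not_exists,
    not_imp_not]
  exact ⟨fun h i => ⟨h.1 i, h.2 i⟩, fun h => ⟨fun i => (h i).1, fun i => (h i).2⟩⟩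

theorem setOf_mem_B {U : Finset ℕ} {ω : Ω} (hω : ω ∈ B A U) : {i | ω ∈ A i} = U := by
  ext i
  exact ((mem_B_iff.1 hω) i).symm

theorem pairwise_disjoint_B : Pairwise (Disjoint on B A) := fun _ _ hUV =>
  Set.disjoint_left.2 fun _ hU hV =>
    hUV (Finset.coe_injective ((setOf_mem_B hU).symm.trans (setOf_mem_B hV)))

theorem measurableSet_B [MeasurableSpace Ω] (hA : ∀ i, MeasurableSet (A i)) (U : Finset ℕ) :
    MeasurableSet (B A U) :=
  (MeasurableSet.biInter U.countable_toSet fun i _ => hA i).diff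
    (MeasurableSet.biUnion (Set.to_countable _) fun i _ => hA i)

theorem mem_limsup_iff_infinite {ω : Ω} :
    ω ∈ ⋂ n, ⋃ i, ⋃ _ : n ≤ i, A i ↔ {i | ω ∈ A i}.Infinite := by
  rw [← Nat.frequently_atTop_iff_infinite, frequently_atTop]
  simp

theorem biInter_sdiff_limsup_eq_iUnion_B (s : Finset ℕ) :
    (⋂ i ∈ s, A i) \ ⋂ n, ⋃ i, ⋃ _ : n ≤ i, A i = ⋃ U : {U : Finset ℕ // s ⊆ U}, B A U := by
  ext ω
  simp only [Set.mem_sdiff, mem_limsup_iff_infinite, Set.not_infinite, Set.mem_iUnion]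
  constructor
  · rintro ⟨hs, hfin⟩
    refine ⟨⟨hfin.toFinset, fun i hi => hfin.mem_toFinset.2 (Set.mem_iInter₂.1 hs i hi)⟩, ?_⟩
    exact mem_B_iff.2 fun i => hfin.mem_toFinset
  · rintro ⟨⟨U, hsU⟩, hω⟩
    refine ⟨Set.mem_biInter fun i hi => (mem_B_iff.1 hω i).1 (hsU hi), ?_⟩
    rw [setOf_mem_B hω]
    exact U.finite_toSet

theorem measure_biInter_eq_tsum_B [MeasurableSpace Ω] (μ : Measure Ω)
    (hA : ∀ i, MeasurableSet (A i)) (hinf : μ (⋂ n, ⋃ i, ⋃ _ : n ≤ i, A i) = 0)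
    (s : Finset ℕ) :
    μ (⋂ i ∈ s, A i) = ∑' U : {U : Finset ℕ // s ⊆ U}, μ (B A U) := by
  rw [← measure_sdiff_null hinf, biInter_sdiff_limsup_eq_iUnion_B]
  exact measure_iUnion (pairwise_disjoint_B.comp_of_injective Subtype.val_injective)
    fun U => measurableSet_B hA U

end

theorem tsum_tsum_superset_eq_tsum_choose_mul {α : Type*} (f : Finset α → ℝ≥0∞) (k : ℕ) :
    ∑' s : {s : Finset α // s.card = k}, ∑' U : {U : Finset α // ↑s ⊆ U}, f U
      = ∑' U : Finset α, (U.card.choose k : ℝ≥0∞) * f U := by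
  have count (U : Finset α) :
      ∑' s : Finset α, (↑(U.powersetCard k) : Set (Finset α)).indicator (fun _ => f U) s
        = (U.card.choose k : ℝ≥0∞) * f U := by
    rw [← tsum_subtype, Finset.tsum_subtype' (U.powersetCard k) fun _ => f U, Finset.sum_const,
      Finset.card_powersetCard, nsmul_eq_mul]
  calc ∑' s : {s : Finset α // s.card = k}, ∑' U : {U : Finset α // ↑s ⊆ U}, f U
      = ∑' (s : Finset α) (U : Finset α),
          (↑(U.powersetCard k) : Set (Finset α)).indicator (fun _ => f U) s := by
        refine (tsum_subtype {s : Finset α | s.card = k}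
          fun s => ∑' U : {U // s ⊆ U}, f U).trans (tsum_congr fun s => ?_)
        by_cases hs : s.card = k
        · rw [Set.indicator_of_mem (show s ∈ {s : Finset α | s.card = k} from hs)]
          refine (tsum_subtype {U | s ⊆ U} f).trans (tsum_congr fun U => ?_)
          by_cases hsU : s ⊆ U <;> simp [hs, hsU]
        · simp [hs]
    _ = ∑' U : Finset α, (U.card.choose k : ℝ≥0∞) * f U := by
        rw [ENNReal.tsum_comm]
        exact tsum_congr count

theorem tsum_eq_tsum_tsum_card {α : Type*} (f : Finset α → ℝ≥0∞) :
    ∑' U, f U = ∑' j : ℕ, ∑' U : {U : Finset α // U.card = j}, f U := by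
  rw [← (Equiv.sigmaFiberEquiv Finset.card).tsum_eq, ENNReal.tsum_sigma']
  rfl

theorem tsum_eq_tsum_add_of_eq_zero {g : ℕ → ℝ≥0∞} {k : ℕ} (h : ∀ j < k, g j = 0) :
    ∑' j, g j = ∑' j, g (j + k) := by
  rw [← ENNReal.summable.sum_add_tsum_nat_add',
    Finset.sum_eq_zero fun j hj => h j (Finset.mem_range.1 hj), zero_add]

theorem stmt9_general {Ω : Type*} [MeasurableSpace Ω] (μ : Measure Ω)
    (A : ℕ → Set Ω) (hA : ∀ i, MeasurableSet (A i))
    (hinf : μ (⋂ n, ⋃ i, ⋃ _ : n ≤ i, A i) = 0) (k : ℕ) :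
    S μ A k = ∑' j : ℕ, (Nat.choose (j + k) k : ℝ≥0∞) * T μ A (j + k) := by
  calc S μ A k
      = ∑' s : {s : Finset ℕ // s.card = k}, ∑' U : {U : Finset ℕ // ↑s ⊆ U}, μ (B A U) :=
        tsum_congr fun s => measure_biInter_eq_tsum_B μ hA hinf s
    _ = ∑' U : Finset ℕ, (U.card.choose k : ℝ≥0∞) * μ (B A U) :=
        tsum_tsum_superset_eq_tsum_choose_mul (fun U => μ (B A U)) k
    _ = ∑' j : ℕ, (j.choose k : ℝ≥0∞) * T μ A j := by
        rw [tsum_eq_tsum_tsum_card]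
        refine tsum_congr fun j => ?_
        rw [T, ← ENNReal.tsum_mul_left]
        exact tsum_congr fun U => by rw [U.2]
    _ = ∑' j : ℕ, (Nat.choose (j + k) k : ℝ≥0∞) * T μ A (j + k) :=
        tsum_eq_tsum_add_of_eq_zero fun j hj => by simp [Nat.choose_eq_zero_of_lt hj]

/-- If `Pr(limsup A_i) = 0` then `S_k = Σ_j C(j+k, k) T_{j+k}` as an identity in `[0,∞]`. -/
theorem stmt9 {Ω : Type*} [MeasurableSpace Ω] (μ : Measure Ω) [IsProbabilityMeasure μ]
    (A : ℕ → Set Ω) (hA : ∀ i, MeasurableSet (A i))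
    (hinf : μ (⋂ n, ⋃ i, ⋃ _ : n ≤ i, A i) = 0) (k : ℕ) (hk : 1 ≤ k) :
    S μ A k = ∑' j : ℕ, (Nat.choose (j + k) k : ℝ≥0∞) * T μ A (j + k) :=
  stmt9_general μ A hA hinf k
end

section
/- Let (Ω,Σ,Pr) be a probability space and A_i ∈ Σ for i ∈ ℕ. If S_l := Σ_{1≤i₁<…<i_l} Pr(A_{i₁}∩…∩A_{i_l}) is finite for some l ∈ ℕ, then S_k is finite for every positive integer k < l. -/
open MeasureTheory Filter ENNReal

/-!
Write `S_m = ∫ N_m dμ`, where `N_m(ω)` counts the `m`-sets of indices of events containing `ω`.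
On each finite set `T` of events containing `ω` there are `C(|T|, m)` such sets, and
`C(n, k) ≤ C(l, k) (1 + C(n, l))` for `k ≤ l`: either `n < l`, or each `k`-subset of an
`n`-set lies in one of its `l`-subsets, each of which has `C(l, k)` subsets of size `k`.
Passing to the supremum over `T` gives `N_k ≤ C(l, k) (1 + N_l)`, and integrating over a finite
measure gives `S_k ≤ C(l, k) (μ Ω + S_l)`.
-/

theorem Nat.choose_le_choose_mul_one_add_choose {k l : ℕ} (n : ℕ) (hkl : k ≤ l) :
    n.choose k ≤ l.choose k * (1 + n.choose l) := by
  rcases lt_or_ge n l with hnl | hln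
  · calc n.choose k ≤ l.choose k := Nat.choose_le_choose k hnl.le
      _ ≤ l.choose k * (1 + n.choose l) := Nat.le_mul_of_pos_right _ (by omega)
  · calc n.choose k ≤ n.choose k * (n - k).choose (l - k) :=
          Nat.le_mul_of_pos_right _ (Nat.choose_pos (by omega))
      _ = n.choose l * l.choose k := (Nat.choose_mul hkl).symm
      _ ≤ l.choose k * (1 + n.choose l) := by
          rw [mul_comm, mul_one_add]; exact Nat.le_add_left _ _

section OccurrenceCount

variable {Ω ι : Type*} (A : ι → Set Ω)

noncomputable def occurrenceCount (m : ℕ) (ω : Ω) : ℝ≥0∞ :=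
  ∑' s : {s : Finset ι // s.card = m}, (⋂ i ∈ (s : Finset ι), A i).indicator 1 ω

theorem sum_indicator_subtype_powersetCard {ω : Ω} {T : Finset ι} (hT : ∀ i ∈ T, ω ∈ A i)
    (m : ℕ) :
    ∑ s ∈ (T.powersetCard m).subtype (fun s : Finset ι => s.card = m),
      (⋂ i ∈ (s : Finset ι), A i).indicator (1 : Ω → ℝ≥0∞) ω = T.card.choose m := by
  have hone : ∀ s ∈ (T.powersetCard m).subtype (fun s : Finset ι => s.card = m),
      (⋂ i ∈ (s : Finset ι), A i).indicator (1 : Ω → ℝ≥0∞) ω = 1 := fun s hs => by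
    rw [Finset.mem_subtype, Finset.mem_powersetCard] at hs
    exact Set.indicator_of_mem (Set.mem_iInter₂.2 fun i hi => hT i (hs.1 hi)) _
  rw [Finset.sum_congr rfl hone, Finset.sum_const, nsmul_one, Finset.card_subtype,
    Finset.filter_true_of_mem fun s hs => (Finset.mem_powersetCard.1 hs).2,
    Finset.card_powersetCard]

theorem choose_card_le_occurrenceCount {ω : Ω} {T : Finset ι} (hT : ∀ i ∈ T, ω ∈ A i)
    (m : ℕ) : (T.card.choose m : ℝ≥0∞) ≤ occurrenceCount A m ω :=
  sum_indicator_subtype_powersetCard A hT m ▸ ENNReal.sum_le_tsum _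

theorem occurrenceCount_le_iSup_choose (m : ℕ) (ω : Ω) :
    occurrenceCount A m ω ≤
      ⨆ (T : Finset ι) (_ : ∀ i ∈ T, ω ∈ A i), (T.card.choose m : ℝ≥0∞) := by
  classical
  rw [occurrenceCount, ENNReal.tsum_eq_iSup_sum]
  refine iSup_le fun F => ?_
  set T := (F.biUnion Subtype.val).filter (fun i => ω ∈ A i)
  have hT : ∀ i ∈ T, ω ∈ A i := fun i hi => (Finset.mem_filter.1 hi).2
  -- only the sets `s ∈ F` whose events all contain `ω` contribute, and those are subsets of `T`
  have hsupp : ∀ s ∈ F,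
      (⋂ i ∈ (s : Finset ι), A i).indicator (1 : Ω → ℝ≥0∞) ω ≠ 0 →
      s ∈ (T.powersetCard m).subtype (fun s : Finset ι => s.card = m) := by
    intro s hsF hs
    have hω := Set.mem_iInter₂.1 (Set.mem_of_indicator_ne_zero hs)
    rw [Finset.mem_subtype, Finset.mem_powersetCard]
    exact ⟨fun i hi => Finset.mem_filter.2 ⟨Finset.mem_biUnion.2 ⟨s, hsF, hi⟩, hω i hi⟩,
      s.2⟩
  calc _ ≤ _ := Finset.sum_le_sum_of_ne_zero hsupp
    _ = (T.card.choose m : ℝ≥0∞) := sum_indicator_subtype_powersetCard A hT m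
    _ ≤ _ := le_iSup₂_of_le T hT le_rfl

theorem occurrenceCount_le_choose_mul {k l : ℕ} (hkl : k ≤ l) (ω : Ω) :
    occurrenceCount A k ω ≤ l.choose k * (1 + occurrenceCount A l ω) := by
  refine (occurrenceCount_le_iSup_choose A k ω).trans (iSup₂_le fun T hT => ?_)
  calc (T.card.choose k : ℝ≥0∞) ≤ (l.choose k * (1 + T.card.choose l) : ℕ) := by
        exact_mod_cast Nat.choose_le_choose_mul_one_add_choose _ hkl
    _ = l.choose k * (1 + (T.card.choose l : ℝ≥0∞)) := by push_cast; rfl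
    _ ≤ l.choose k * (1 + occurrenceCount A l ω) := by
        gcongr; exact choose_card_le_occurrenceCount A hT l

end OccurrenceCount

theorem S_eq_lintegral_occurrenceCount {Ω : Type*} [MeasurableSpace Ω] (μ : Measure Ω)
    {A : ℕ → Set Ω} (hA : ∀ i, MeasurableSet (A i)) (m : ℕ) :
    S μ A m = ∫⁻ ω, occurrenceCount A m ω ∂μ := by
  have hmeas (s : {s : Finset ℕ // s.card = m}) :
      MeasurableSet (⋂ i ∈ (s : Finset ℕ), A i) :=
    .biInter (Set.to_countable _) fun i _ => hA i
  unfold S occurrenceCount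
  rw [lintegral_tsum fun s => (measurable_one.indicator (hmeas s)).aemeasurable]
  exact tsum_congr fun s => (lintegral_indicator_one (hmeas s)).symm

theorem S_le_choose_mul {Ω : Type*} [MeasurableSpace Ω] (μ : Measure Ω) {A : ℕ → Set Ω}
    (hA : ∀ i, MeasurableSet (A i)) {k l : ℕ} (hkl : k ≤ l) :
    S μ A k ≤ l.choose k * (μ Set.univ + S μ A l) := by
  rw [S_eq_lintegral_occurrenceCount μ hA, S_eq_lintegral_occurrenceCount μ hA]
  calc ∫⁻ ω, occurrenceCount A k ω ∂μ
      ≤ ∫⁻ ω, l.choose k * (1 + occurrenceCount A l ω) ∂μ :=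
        lintegral_mono fun ω => occurrenceCount_le_choose_mul A hkl ω
    _ = l.choose k * (μ Set.univ + ∫⁻ ω, occurrenceCount A l ω ∂μ) := by
        rw [lintegral_const_mul' _ _ (natCast_ne_top _), lintegral_add_left measurable_const,
          lintegral_one]

theorem stmt10_general {Ω : Type*} [MeasurableSpace Ω] (μ : Measure Ω) [IsProbabilityMeasure μ]
    (A : ℕ → Set Ω) (hA : ∀ i, MeasurableSet (A i))
    (l : ℕ) (hfin : S μ A l ≠ ∞) :
    ∀ k, 1 ≤ k → k < l → S μ A k ≠ ∞ := by
  intro k _ hkl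
  have hbound : (l.choose k : ℝ≥0∞) * (μ Set.univ + S μ A l) ≠ ∞ :=
    mul_ne_top (natCast_ne_top _) (add_ne_top.2 ⟨measure_ne_top μ _, hfin⟩)
  exact ne_top_of_le_ne_top hbound (S_le_choose_mul μ hA hkl.le)

/-- If `S_l < ∞` for some `l ≥ 1`, then `S_k < ∞` for every positive `k < l`. -/
theorem stmt10 {Ω : Type*} [MeasurableSpace Ω] (μ : Measure Ω) [IsProbabilityMeasure μ]
    (A : ℕ → Set Ω) (hA : ∀ i, MeasurableSet (A i))
    (l : ℕ) (hl : 1 ≤ l) (hfin : S μ A l ≠ ∞) :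
    ∀ k, 1 ≤ k → k < l → S μ A k ≠ ∞ :=
  stmt10_general μ A hA l hfin
end

section
/- Let X: Ω → ℤ₊ be a random variable with binomial moments S_j := E[C(X,j)]. Fix k ∈ ℕ. Then the identity Pr(X ≥ k) = Σ_{j=0}^∞ (-1)^j C(j+k-1, k-1) S_{j+k} (with convergent series) holds if and only if all S_l are finite and l^{k-1} S_l → 0 as l → ∞. -/
/-!
For `n ≥ k = s + 1` the partial sums `∑_{j<N} (-1)^j C(j+s,s) C(n,j+s+1)` alternate around
`1 = [n ≥ k]`, with error at most the next term `C(N+s,s) C(n,N+s+1)`; for `n < k` all terms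
vanish. Taking expectations, the `N`-th partial sum of the series is within
`C(N+s,s) S_{N+s+1}` of `Pr(X ≥ k)`, so the series converges to `Pr(X ≥ k)` iff its terms tend
to zero. Since `C(N+s,s) = Θ((N+s+1)^s)`, this is the condition `l^s S_l → 0`.
-/

open MeasureTheory Filter ENNReal

noncomputable def binomMoment {Ω : Type*} [MeasurableSpace Ω] (μ : Measure Ω) (X : Ω → ℕ)
    (j : ℕ) : ℝ≥0∞ :=
  ∫⁻ ω, ((X ω).choose j : ℝ≥0∞) ∂μ

open Topology Asymptotics

/-- With `n = d + s + 1` this is `(-1)^N (1 - ∑_{j<N} (-1)^j C(j+s,s) C(n,j+s+1))`; as a sum of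
natural numbers its nonnegativity (the Bonferroni inequalities) is evident. -/
def bonferroniRemainder (s d N : ℕ) : ℕ :=
  ∑ i ∈ Finset.range (s + 1), N.multichoose i * (d + i).choose (N + i)

theorem bonferroniRemainder_zero (s d : ℕ) : bonferroniRemainder s d 0 = 1 := by
  simp [bonferroniRemainder, Finset.sum_range_succ']

theorem bonferroniRemainder_add_succ (s d N : ℕ) :
    bonferroniRemainder s d N + bonferroniRemainder s d (N + 1) =
      (N + 1).multichoose s * (d + s + 1).choose (N + s + 1) := by
  induction s with
  | zero => simp [bonferroniRemainder, Nat.choose_succ_succ]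
  | succ s ih =>
    have hsucc : ∀ M, bonferroniRemainder (s + 1) d M =
        bonferroniRemainder s d M + M.multichoose (s + 1) * (d + s + 1).choose (M + s + 1) :=
      fun M ↦ Finset.sum_range_succ _ _
    rw [hsucc, hsucc, add_add_add_comm, ih, Nat.multichoose_succ_succ, ← add_assoc d,
      ← add_assoc N, Nat.choose_succ_succ' (d + s + 1),
      show N + 1 + s + 1 = N + s + 1 + 1 by ring]
    ring

theorem sum_alternating_eq_one_sub {R : Type*} [CommRing R] {a r : ℕ → R} (hr₀ : r 0 = 1)
    (hr : ∀ N, r N + r (N + 1) = a N) (N : ℕ) :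
    ∑ j ∈ Finset.range N, (-1) ^ j * a j = 1 - (-1) ^ N * r N := by
  induction N with
  | zero => simp [hr₀]
  | succ N ih =>
    rw [Finset.sum_range_succ, ih, ← hr N, pow_succ]
    ring

theorem abs_one_sub_sum_alternating_le {R : Type*} [CommRing R] [LinearOrder R]
    [IsStrictOrderedRing R] {a r : ℕ → R} (hr₀ : r 0 = 1) (hr_nonneg : ∀ N, 0 ≤ r N)
    (hr : ∀ N, r N + r (N + 1) = a N) (N : ℕ) :
    |1 - ∑ j ∈ Finset.range N, (-1) ^ j * a j| ≤ a N := by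
  rw [sum_alternating_eq_one_sub hr₀ hr, _root_.sub_sub_cancel, abs_mul, abs_neg_one_pow, one_mul,
    abs_of_nonneg (hr_nonneg N), ← hr N]
  exact le_add_of_nonneg_right (hr_nonneg _)

theorem tendsto_zero_of_tendsto_sum_range {G : Type*} [AddCommGroup G] [TopologicalSpace G]
    [IsTopologicalAddGroup G] {f : ℕ → G} {c : G}
    (h : Tendsto (fun n ↦ ∑ i ∈ Finset.range n, f i) atTop (𝓝 c)) : Tendsto f atTop (𝓝 0) := by
  simpa [Finset.sum_range_succ] using (h.comp (tendsto_add_atTop_nat 1)).sub h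

theorem isTheta_choose_add (s : ℕ) :
    (fun N : ℕ ↦ ((N + s).choose s : ℝ)) =Θ[atTop] fun N ↦ ((N + s + 1 : ℕ) : ℝ) ^ s := by
  have hsucc : (fun n : ℕ ↦ (n : ℝ)) =Θ[atTop] fun n ↦ ((n + 1 : ℕ) : ℝ) := by
    refine (IsEquivalent.isTheta ?_).symm
    push_cast
    exact IsEquivalent.refl.add_const_of_norm_tendsto_atTop
      (tendsto_norm_atTop_atTop.comp tendsto_natCast_atTop_atTop)
  have hshift := tendsto_add_atTop_nat s
  have hchoose := isTheta_choose s
  exact IsTheta.trans ⟨hchoose.1.comp_tendsto hshift, hchoose.2.comp_tendsto hshift⟩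
    (IsTheta.pow ⟨hsucc.1.comp_tendsto hshift, hsucc.2.comp_tendsto hshift⟩ s)

theorem tendsto_choose_mul_iff (s : ℕ) {a : ℕ → ℝ} :
    Tendsto (fun N ↦ ((N + s).choose s : ℝ) * a (N + s + 1)) atTop (𝓝 0) ↔
      Tendsto (fun l : ℕ ↦ (l : ℝ) ^ s * a l) atTop (𝓝 0) := by
  rw [← tendsto_add_atTop_iff_nat (f := fun l : ℕ ↦ (l : ℝ) ^ s * a l) (s + 1)]
  exact ((isTheta_choose_add s).mul (isTheta_refl _ _)).tendsto_zero_iff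

theorem abs_ite_sub_sum_alternating_choose_le (s n N : ℕ) :
    |(if s + 1 ≤ n then 1 else 0 : ℝ) -
        ∑ j ∈ Finset.range N, (-1) ^ j * ((j + s).choose s : ℝ) * n.choose (j + s + 1)| ≤
      ((N + s).choose s : ℝ) * n.choose (N + s + 1) := by
  rcases le_or_gt (s + 1) n with h | h
  · obtain ⟨d, rfl⟩ : ∃ d, n = d + s + 1 := ⟨n - (s + 1), by omega⟩
    have hr (M : ℕ) : (bonferroniRemainder s d M : ℝ) + bonferroniRemainder s d (M + 1) =
        ((M + s).choose s : ℝ) * (d + s + 1).choose (M + s + 1) := by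
      rw [← Nat.cast_add, bonferroniRemainder_add_succ, Nat.multichoose_eq,
        Nat.add_right_comm, Nat.add_sub_cancel, Nat.cast_mul]
    simp only [if_pos h, mul_assoc]
    exact abs_one_sub_sum_alternating_le (by simp [bonferroniRemainder_zero])
      (fun _ ↦ Nat.cast_nonneg _) hr N
  · have hzero (m : ℕ) : n.choose (m + s + 1) = 0 := Nat.choose_eq_zero_of_lt (by omega)
    simp [hzero, Nat.lt_succ_iff.1 h]

section BinomialMoments

variable {Ω : Type*} [MeasurableSpace Ω] {μ : Measure Ω} {X : Ω → ℕ}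

theorem measurable_natCast_choose (hX : Measurable X) (j : ℕ) :
    Measurable fun ω ↦ ((X ω).choose j : ℝ≥0∞) :=
  (measurable_from_nat (f := fun n : ℕ ↦ (n.choose j : ℝ≥0∞))).comp hX

theorem toReal_binomMoment (hX : Measurable X) (j : ℕ) :
    (binomMoment μ X j).toReal = ∫ ω, ((X ω).choose j : ℝ) ∂μ := by
  rw [binomMoment, ← integral_toReal (measurable_natCast_choose hX j).aemeasurable
    (ae_of_all _ fun _ ↦ natCast_lt_top _)]
  simp_rw [toReal_natCast]

theorem integrable_choose_of_binomMoment_ne_top (hX : Measurable X) {j : ℕ}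
    (hj : binomMoment μ X j ≠ ∞) : Integrable (fun ω ↦ ((X ω).choose j : ℝ)) μ := by
  simpa using integrable_toReal_of_lintegral_ne_top
    (measurable_natCast_choose hX j).aemeasurable hj

theorem abs_measureReal_sub_sum_alternating_binomMoment_le [IsFiniteMeasure μ]
    (hX : Measurable X) (hS : ∀ l, 1 ≤ l → binomMoment μ X l ≠ ∞) (s N : ℕ) :
    |(μ {ω | s + 1 ≤ X ω}).toReal -
        ∑ j ∈ Finset.range N, (-1) ^ j * ((j + s).choose s : ℝ) *
          (binomMoment μ X (j + s + 1)).toReal| ≤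
      ((N + s).choose s : ℝ) * (binomMoment μ X (N + s + 1)).toReal := by
  have hint (j : ℕ) : Integrable (fun ω ↦ ((X ω).choose (j + s + 1) : ℝ)) μ :=
    integrable_choose_of_binomMoment_ne_top hX (hS _ (by omega))
  have hset : MeasurableSet {ω | s + 1 ≤ X ω} := hX measurableSet_Ici
  have hind : (fun ω ↦ if s + 1 ≤ X ω then (1 : ℝ) else 0) = {ω | s + 1 ≤ X ω}.indicator 1 := by
    ext ω
    simp [Set.indicator_apply]
  have hsum : ∑ j ∈ Finset.range N, (-1) ^ j * ((j + s).choose s : ℝ) *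
        (binomMoment μ X (j + s + 1)).toReal =
      ∫ ω, ∑ j ∈ Finset.range N,
        (-1) ^ j * ((j + s).choose s : ℝ) * (X ω).choose (j + s + 1) ∂μ := by
    rw [integral_finsetSum _ fun j _ ↦ (hint j).const_mul _]
    simp_rw [integral_const_mul, toReal_binomMoment hX]
  rw [← measureReal_def, ← integral_indicator_one hset, ← hind, hsum, toReal_binomMoment hX,
    ← integral_const_mul ((N + s).choose s : ℝ), ← integral_sub]
  · rw [← Real.norm_eq_abs]
    refine norm_integral_le_of_norm_le ((hint N).const_mul _) (ae_of_all _ fun ω ↦ ?_)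
    exact abs_ite_sub_sum_alternating_choose_le s (X ω) N
  · exact hind ▸ (integrable_const 1).indicator hset
  · exact integrable_finsetSum _ fun j _ ↦ (hint j).const_mul _

end BinomialMoments

/-- `Pr(X ≥ k) = Σ_j (-1)^j C(j+k-1,k-1) S_{j+k}` (with convergent series) holds
iff all `S_l` are finite and `l^(k-1) S_l → 0`. -/
theorem stmt14 {Ω : Type*} [MeasurableSpace Ω] (μ : Measure Ω) [IsProbabilityMeasure μ]
    (X : Ω → ℕ) (hX : Measurable X) (k : ℕ) (hk : 1 ≤ k) :
    ((∀ l, 1 ≤ l → binomMoment μ X l ≠ ∞) ∧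
      Tendsto (fun n => ∑ j ∈ Finset.range n,
          (-1 : ℝ) ^ j * (Nat.choose (j + k - 1) (k - 1)) * (binomMoment μ X (j + k)).toReal)
        atTop (nhds (μ {ω | k ≤ X ω}).toReal)) ↔
    ((∀ l, 1 ≤ l → binomMoment μ X l ≠ ∞) ∧
      Tendsto (fun l : ℕ => (l : ℝ) ^ (k - 1) * (binomMoment μ X l).toReal)
        atTop (nhds 0)) := by
  obtain ⟨s, rfl⟩ : ∃ s, k = s + 1 := ⟨k - 1, by omega⟩
  simp only [← add_assoc, Nat.add_sub_cancel]
  refine and_congr_right fun hS ↦ ?_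
  rw [← tendsto_choose_mul_iff s]
  constructor
  · intro hseries
    simpa [abs_mul] using (tendsto_zero_of_tendsto_sum_range hseries).abs
  · intro hterms
    rw [← tendsto_sub_nhds_zero_iff]
    refine squeeze_zero_norm (fun N ↦ ?_) hterms
    rw [Real.norm_eq_abs, abs_sub_comm]
    exact abs_measureReal_sub_sum_alternating_binomMoment_le hX hS s N
end

section
/- Let X: Ω → ℤ₊ be a random variable with binomial moments S_j := E[C(X,j)]. Fix k ∈ ℕ. Then the identity Pr(X = k-1) = Σ_{j=0}^∞ (-1)^j C(j+k-1, k-1) S_{j+k-1} (with convergent series) holds if and only if all S_l are finite and l^{k-1} S_l → 0 as l → ∞. -/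
open MeasureTheory Filter ENNReal

/-!
Write `m = k - 1`. Since `C(j+m,m) C(x,j+m) = C(x,m) C(x-m,j)` and the partial alternating sums
of `C(N,·)` are `±C(N-1,n)`, the partial sums of `Σ_j (-1)^j C(j+m,m) C(x,j+m)` differ from the
indicator of `x = m` by at most the first omitted term (Bonferroni). Taking expectations, the
`n`-th partial sum of the series is within `c_n = C(n+m,m) S_{n+m}` of `Pr(X = m)`, while `c_n` is
also the absolute value of the `n`-th term. Hence the series converges to `Pr(X = m)` iff
`c_n → 0`, which is equivalent to `l^m S_l → 0` because `C(l,m) =Θ(l^m)`.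
-/

open Finset Asymptotics

namespace Nat

theorem abs_alternating_sum_range_choose_sub_le (N n : ℕ) :
    |∑ j ∈ range (n + 1), (-1 : ℝ) ^ j * N.choose j - if N = 0 then 1 else 0| ≤ N.choose n := by
  rcases N with _ | N
  · simp [sum_range_succ']
  · have h := congrArg (Int.cast : ℤ → ℝ)
      (Int.alternating_sum_range_choose_eq_choose (n := N) (m := n))
    push_cast at h
    rw [h, if_neg N.succ_ne_zero, sub_zero, abs_mul, abs_pow, abs_neg, abs_one, one_pow, one_mul,
      Nat.abs_cast]
    exact_mod_cast choose_le_succ N n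

theorem choose_add_mul_choose (x m j : ℕ) :
    x.choose (j + m) * (j + m).choose m = x.choose m * (x - m).choose j := by
  simpa using Nat.choose_mul (n := x) (Nat.le_add_left m j)

theorem abs_sum_range_choose_mul_choose_sub_le (x m n : ℕ) :
    |∑ j ∈ range (n + 1), (-1 : ℝ) ^ j * ((j + m).choose m * x.choose (j + m))
        - if x = m then 1 else 0| ≤ (n + m).choose m * x.choose (n + m) := by
  have hsum : ∑ j ∈ range (n + 1), (-1 : ℝ) ^ j * ((j + m).choose m * x.choose (j + m))
      = x.choose m * ∑ j ∈ range (n + 1), (-1 : ℝ) ^ j * (x - m).choose j := by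
    rw [mul_sum]
    refine sum_congr rfl fun j _ => ?_
    rw [mul_comm ((j + m).choose m : ℝ), ← Nat.cast_mul, choose_add_mul_choose, Nat.cast_mul]
    ring
  have hind : (if x = m then (1 : ℝ) else 0) = x.choose m * if x - m = 0 then 1 else 0 := by
    rcases lt_trichotomy x m with h | rfl | h
    · simp [Nat.choose_eq_zero_of_lt h, h.ne]
    · simp
    · simp [h.ne', Nat.sub_ne_zero_of_lt h]
  rw [hsum, hind, ← mul_sub, abs_mul, Nat.abs_cast, mul_comm ((n + m).choose m : ℝ),
    ← Nat.cast_mul, choose_add_mul_choose, Nat.cast_mul]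
  exact mul_le_mul_of_nonneg_left (abs_alternating_sum_range_choose_sub_le _ _) (Nat.cast_nonneg _)

end Nat

theorem tendsto_alternating_partial_sums_iff {c : ℕ → ℝ} {P : ℝ}
    (hc : ∀ n, |∑ j ∈ range (n + 1), (-1 : ℝ) ^ j * c j - P| ≤ c n) :
    Tendsto (fun n => ∑ j ∈ range n, (-1 : ℝ) ^ j * c j) atTop (nhds P) ↔
      Tendsto c atTop (nhds 0) := by
  constructor
  · intro h
    have hterm : Tendsto (fun n => (-1 : ℝ) ^ n * c n) atTop (nhds 0) := by
      simpa [sum_range_succ] using ((tendsto_add_atTop_iff_nat 1).2 h).sub h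
    rw [tendsto_zero_iff_abs_tendsto_zero]
    simpa [Function.comp_def, abs_mul] using hterm.abs
  · intro h
    refine (tendsto_add_atTop_iff_nat 1).1 ?_
    rw [tendsto_iff_norm_sub_tendsto_zero]
    exact squeeze_zero (fun _ => norm_nonneg _) hc h

theorem tendsto_choose_mul_iff_tendsto_pow_mul (m : ℕ) (s : ℕ → ℝ) :
    Tendsto (fun l : ℕ => (l.choose m : ℝ) * s l) atTop (nhds 0) ↔
      Tendsto (fun l : ℕ => (l : ℝ) ^ m * s l) atTop (nhds 0) := by
  have h := (isTheta_choose m).mul (isTheta_refl s atTop)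
  exact ⟨h.isBigO_symm.trans_tendsto, h.isBigO.trans_tendsto⟩

section binomMoment

variable {Ω : Type*} [MeasurableSpace Ω] {μ : Measure Ω} {X : Ω → ℕ}

theorem binomMoment_zero [IsProbabilityMeasure μ] : binomMoment μ X 0 = 1 := by
  simp [binomMoment]

theorem measurable_choose_comp (hX : Measurable X) (l : ℕ) :
    Measurable fun ω => ((X ω).choose l : ℝ≥0∞) :=
  (measurable_from_nat (f := fun x : ℕ => (x.choose l : ℝ≥0∞))).comp hX

theorem integral_choose (hX : Measurable X) (l : ℕ) :
    ∫ ω, ((X ω).choose l : ℝ) ∂μ = (binomMoment μ X l).toReal := by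
  simpa [binomMoment] using integral_toReal (μ := μ) (measurable_choose_comp hX l).aemeasurable
    (.of_forall fun ω => natCast_lt_top ((X ω).choose l))

theorem integrable_choose (hX : Measurable X) {l : ℕ} (hl : binomMoment μ X l ≠ ∞) :
    Integrable (fun ω => ((X ω).choose l : ℝ)) μ := by
  simpa using integrable_toReal_of_lintegral_ne_top (measurable_choose_comp hX l).aemeasurable hl

theorem abs_sum_binomMoment_sub_le [IsFiniteMeasure μ] (hX : Measurable X)
    (hfin : ∀ l, binomMoment μ X l ≠ ∞) (m n : ℕ) :
    |∑ j ∈ range (n + 1),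
        (-1 : ℝ) ^ j * ((j + m).choose m * (binomMoment μ X (j + m)).toReal)
      - (μ {ω | X ω = m}).toReal| ≤ (n + m).choose m * (binomMoment μ X (n + m)).toReal := by
  have hsum : ∑ j ∈ range (n + 1),
        (-1 : ℝ) ^ j * ((j + m).choose m * (binomMoment μ X (j + m)).toReal)
      = ∫ ω, ∑ j ∈ range (n + 1), (-1 : ℝ) ^ j * ((j + m).choose m * (X ω).choose (j + m)) ∂μ := by
    rw [integral_finsetSum _ fun j _ => ((integrable_choose hX (hfin _)).const_mul _).const_mul _]
    simp only [integral_const_mul, integral_choose hX]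
  have hind : (μ {ω | X ω = m}).toReal = ∫ ω, {ω | X ω = m}.indicator (1 : Ω → ℝ) ω ∂μ :=
    (integral_indicator_one (hX (measurableSet_singleton m))).symm
  have hbound : (n + m).choose m * (binomMoment μ X (n + m)).toReal
      = ∫ ω, ((n + m).choose m : ℝ) * (X ω).choose (n + m) ∂μ := by
    rw [integral_const_mul ((n + m).choose m : ℝ), integral_choose hX]
  rw [hsum, hind, hbound, ← integral_sub]
  · rw [← Real.norm_eq_abs]
    refine norm_integral_le_of_norm_le ((integrable_choose hX (hfin _)).const_mul _)
      (.of_forall fun ω => ?_)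
    simpa [Set.indicator_apply] using Nat.abs_sum_range_choose_mul_choose_sub_le (X ω) m n
  · exact integrable_finsetSum _ fun j _ =>
      ((integrable_choose hX (hfin _)).const_mul _).const_mul _
  · exact (integrable_const 1).indicator (hX (measurableSet_singleton m))

end binomMoment

/-- `Pr(X = k-1) = Σ_j (-1)^j C(j+k-1,k-1) S_{j+k-1}` (with convergent series) holds
iff all `S_l` are finite and `l^(k-1) S_l → 0`. -/
theorem stmt15 {Ω : Type*} [MeasurableSpace Ω] (μ : Measure Ω) [IsProbabilityMeasure μ]
    (X : Ω → ℕ) (hX : Measurable X) (k : ℕ) (hk : 1 ≤ k) :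
    ((∀ l, 1 ≤ l → binomMoment μ X l ≠ ∞) ∧
      Tendsto (fun n => ∑ j ∈ Finset.range n,
          (-1 : ℝ) ^ j * (Nat.choose (j + k - 1) (k - 1)) * (binomMoment μ X (j + k - 1)).toReal)
        atTop (nhds (μ {ω | X ω = k - 1}).toReal)) ↔
    ((∀ l, 1 ≤ l → binomMoment μ X l ≠ ∞) ∧
      Tendsto (fun l : ℕ => (l : ℝ) ^ (k - 1) * (binomMoment μ X l).toReal)
        atTop (nhds 0)) := by
  obtain ⟨m, rfl⟩ : ∃ m, k = m + 1 := ⟨k - 1, by omega⟩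
  simp only [Nat.add_sub_cancel, ← Nat.add_assoc, mul_assoc]
  refine and_congr_right fun hpos => ?_
  have hfin (l : ℕ) : binomMoment μ X l ≠ ∞ := by
    rcases l with _ | l
    · simp [binomMoment_zero]
    · exact hpos _ l.succ_pos
  rw [tendsto_alternating_partial_sums_iff (abs_sum_binomMoment_sub_le hX hfin m),
    tendsto_add_atTop_iff_nat (f := fun l => (l.choose m : ℝ) * (binomMoment μ X l).toReal) m]
  exact tendsto_choose_mul_iff_tendsto_pow_mul m _
end
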